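/- arXiv:1102.4246 — 2 statements merged into one kernel-verified Lean document; each statement's English description precedes it below -/
import Mathlib

section
/- Let 𝐚⁰ ⊆ 𝐚¹ be knot sequences in an interval J ⊆ ℝ, and let θ⁰ = (θ⁰_a)_{a∈𝐚⁰, a<sup J} and θ¹ = (θ¹_a)_{a∈𝐚¹, a<sup J} be parameter sequences taking values in (0,1). For a ∈ 𝐚⁰ let a₊ denote its successor in 𝐚⁰, and set 𝐛⁰ := 𝐛(𝐚⁰,θ⁰) and 𝐛¹ := 𝐛(𝐚¹,θ¹). Assume that for every a ∈ 𝐚⁰ with a < sup J: b⁰_a ∈ 𝐚¹ whenever (a,a₊) contains a point of 𝐚¹, and b⁰_a ∈ 𝐛¹ whenever (a,a₊) contains no point of 𝐚¹. Then V(𝐚⁰,θ⁰) ⊆ V(𝐚¹,θ¹). -/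
open MeasureTheory Set Filter

noncomputable section

namespace KnotWavelet

/-- The space `L²(J)` for `J ⊆ ℝ`. -/
abbrev L2S (J : Set ℝ) := Lp ℝ 2 (volume.restrict J)

/-- `f ∈ L²(J)` is supported (a.e.) in `I`. -/
def SuppIn (J : Set ℝ) (f : L2S J) (I : Set ℝ) : Prop :=
  ∀ᵐ x ∂(volume.restrict J), x ∉ I → f x = 0

/-- `G_I`, the members of `G` supported in `I`. -/
def suppSet (J : Set ℝ) (G : Set (L2S J)) (I : Set ℝ) : Set (L2S J) :=
  {g ∈ G | SuppIn J g I}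

/-- For a subspace `V`, the subspace of members supported in `I`. -/
def suppSub (J : Set ℝ) (V : Submodule ℝ (L2S J)) (I : Set ℝ) : Submodule ℝ (L2S J) where
  carrier := {f | f ∈ V ∧ SuppIn J f I}
  zero_mem' := ⟨V.zero_mem, by
    filter_upwards [Lp.coeFn_zero ℝ 2 (volume.restrict J)] with x hx _
    simpa using hx⟩
  add_mem' := by
    rintro f g ⟨hfV, hf⟩ ⟨hgV, hg⟩
    refine ⟨V.add_mem hfV hgV, ?_⟩
    filter_upwards [Lp.coeFn_add f g, hf, hg] with x hx h1 h2 hxI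
    rw [hx]
    simp [Pi.add_apply, h1 hxI, h2 hxI]
  smul_mem' := by
    rintro c f ⟨hfV, hf⟩
    refine ⟨V.smul_mem c hfV, ?_⟩
    filter_upwards [Lp.coeFn_smul c f, hf] with x hx h1 hxI
    rw [hx]
    simp [h1 hxI]

/-- The successor `a₊` of `a` in `ks`, as an extended real (`+∞` if there is none). -/
def succE (ks : Set ℝ) (a : ℝ) : EReal := sInf ((fun x : ℝ => (x : EReal)) '' {b ∈ ks | a < b})

/-- The predecessor `a₋` of `a` in `ks`, as an extended real (`−∞` if there is none). -/
def predE (ks : Set ℝ) (a : ℝ) : EReal := sSup ((fun x : ℝ => (x : EReal)) '' {b ∈ ks | b < a})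

/-- The successor `a₊` of `a` in `ks` as a real number (junk value if there is none). -/
def succR (ks : Set ℝ) (a : ℝ) : ℝ := sInf {b ∈ ks | a < b}

/-- The interval `[a, a₊]`. -/
def IccS (ks : Set ℝ) (a : ℝ) : Set ℝ := {x | a ≤ x ∧ (x : EReal) ≤ succE ks a}

/-- The interval `[a₋, a₊]`. -/
def IccPS (ks : Set ℝ) (a : ℝ) : Set ℝ :=
  {x | predE ks a ≤ (x : EReal) ∧ (x : EReal) ≤ succE ks a}

/-- The interval `[a₋, a]`. -/
def IccP (ks : Set ℝ) (a : ℝ) : Set ℝ := {x | predE ks a ≤ (x : EReal) ∧ x ≤ a}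

/-- The interval `(a, a₊)`. -/
def IooS (ks : Set ℝ) (a : ℝ) : Set ℝ := {x | a < x ∧ (x : EReal) < succE ks a}

/-- The interval `[a₊, ∞)` (empty if `a₊ = +∞`). -/
def IciS (ks : Set ℝ) (a : ℝ) : Set ℝ := {x | succE ks a ≤ (x : EReal)}

/-- `ks` is a knot sequence in the interval `J`: it is a subset of `J` with at least three
elements, has no cluster (accumulation) point in `J`, and `inf ks = inf J`, `sup ks = sup J`
(as extended reals). -/
structure IsKnotSeq (J ks : Set ℝ) : Prop where
  subset : ks ⊆ J
  nontrivial : ∃ x y z : ℝ, x ∈ ks ∧ y ∈ ks ∧ z ∈ ks ∧ x ≠ y ∧ x ≠ z ∧ y ≠ z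
  noCluster : ∀ x ∈ J, ¬ AccPt x (Filter.principal ks)
  inf_eq : sInf ((fun x : ℝ => (x : EReal)) '' ks) = sInf ((fun x : ℝ => (x : EReal)) '' J)
  sup_eq : sSup ((fun x : ℝ => (x : EReal)) '' ks) = sSup ((fun x : ℝ => (x : EReal)) '' J)

/-- `a'` is the successor of `a` in `ks`. -/
def IsSucc (ks : Set ℝ) (a a' : ℝ) : Prop :=
  a ∈ ks ∧ a' ∈ ks ∧ a < a' ∧ ∀ b ∈ ks, b ≤ a ∨ a' ≤ b

/-- A collection `Φ ⊆ L²(J)` is locally finite: on each compact interval `K ⊆ J` all but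
finitely many members of `Φ` vanish (a.e.) on `K`. -/
def LocFin (J : Set ℝ) (Φ : Set (L2S J)) : Prop :=
  ∀ K : Set ℝ, IsCompact K → K ⊆ J →
    {φ ∈ Φ | ¬ ∀ᵐ x ∂(volume.restrict J), x ∈ K → φ x = 0}.Finite

/-- `Φ̆_a := Φ_{[a,a₊]}`. -/
def breveAt (J : Set ℝ) (ks : Set ℝ) (Φ : Set (L2S J)) (a : ℝ) : Set (L2S J) :=
  suppSet J Φ (IccS ks a)

open Classical in
/-- `Φ̆_{a₋}` (the empty set if `a` has no predecessor). -/
def brevePred (J : Set ℝ) (ks : Set ℝ) (Φ : Set (L2S J)) (a : ℝ) : Set (L2S J) :=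
  if {b ∈ ks | b < a}.Nonempty then suppSet J Φ (IccP ks a) else ∅

/-- `Φ_a := Φ_{[a₋,a₊]} \ Φ̆_{a₋}`. -/
def midAt (J : Set ℝ) (ks : Set ℝ) (Φ : Set (L2S J)) (a : ℝ) : Set (L2S J) :=
  suppSet J Φ (IccPS ks a) \ brevePred J ks Φ a

/-- `Φ̄_a := Φ_a \ Φ̆_a`. -/
def barAt (J : Set ℝ) (ks : Set ℝ) (Φ : Set (L2S J)) (a : ℝ) : Set (L2S J) :=
  midAt J ks Φ a \ breveAt J ks Φ a

open Classical in
/-- `Φ̄_{a₊}` (the empty set if `a` has no successor). -/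
def barSucc (J : Set ℝ) (ks : Set ℝ) (Φ : Set (L2S J)) (a : ℝ) : Set (L2S J) :=
  if {b ∈ ks | a < b}.Nonempty then barAt J ks Φ (succR ks a) else ∅

open Classical in
/-- Multiplication by the characteristic function of `I` (restriction to `I`). -/
def indL2 (J : Set ℝ) (I : Set ℝ) (f : L2S J) : L2S J :=
  if h : MeasurableSet I then ((Lp.memLp f).indicator h).toLp (I.indicator f) else 0

/-- `Φ` is a basis centered on the knot sequence `ks`. -/
def CenteredBasis (J ks : Set ℝ) (Φ : Set (L2S J)) : Prop :=
  LocFin J Φ ∧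
  Φ = ⋃ a ∈ ks, midAt J ks Φ a ∧
  ∀ a ∈ ks, LinearIndependent ℝ
    (fun φ : ↥(midAt J ks Φ a ∪ barSucc J ks Φ a) => indL2 J (IccS ks a) (φ : L2S J))

/-- `S(Φ)`: the `L²`-closure of the span of `Φ`. -/
def SClos (J : Set ℝ) (Φ : Set (L2S J)) : Submodule ℝ (L2S J) :=
  (Submodule.span ℝ Φ).topologicalClosure

/-- An orthogonal basis centered on `ks`. -/
def OrthoCenteredBasis (J ks : Set ℝ) (Φ : Set (L2S J)) : Prop :=
  CenteredBasis J ks Φ ∧ Φ.Pairwise fun f g => (inner ℝ f g : ℝ) = 0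

/-- The orthogonal projection onto the closure of a subspace, as a linear map. -/
def projL {H : Type*} [NormedAddCommGroup H] [InnerProductSpace ℝ H] [CompleteSpace H]
    (K : Submodule ℝ H) : H →ₗ[ℝ] H :=
  K.topologicalClosure.subtype ∘ₗ
    (K.topologicalClosure.orthogonalProjectionOnto : H →L[ℝ] K.topologicalClosure).toLinearMap

/-- The image `P_K U` of a subspace `U` under the orthogonal projection onto (the closure of)
`K`. -/
def projSub {H : Type*} [NormedAddCommGroup H] [InnerProductSpace ℝ H] [CompleteSpace H]
    (K U : Submodule ℝ H) : Submodule ℝ H :=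
  U.map (projL K)

/-- The image `(I − P_K) U`. -/
def oneSubProjSub {H : Type*} [NormedAddCommGroup H] [InnerProductSpace ℝ H] [CompleteSpace H]
    (K U : Submodule ℝ H) : Submodule ℝ H :=
  U.map (LinearMap.id - projL K)

/-- Two subspaces are orthogonal. -/
def PerpSub {H : Type*} [NormedAddCommGroup H] [InnerProductSpace ℝ H]
    (U V : Submodule ℝ H) : Prop :=
  ∀ f ∈ U, ∀ g ∈ V, (inner ℝ f g : ℝ) = 0

end KnotWavelet

namespace QuadWavelet

/-- The space `L²(ℝ)`. -/
abbrev L2R := Lp ℝ 2 (volume : Measure ℝ)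

open Classical in
/-- Interpret a plain function as an element of `L²(ℝ)`. -/
def toL2R (f : ℝ → ℝ) : L2R :=
  if h : MemLp f 2 (volume : Measure ℝ) then h.toLp f else 0

/-- Orthogonal projection onto (the closure of) a subspace. -/
def projC (K : Submodule ℝ L2R) (f : L2R) : L2R :=
  (K.topologicalClosure.orthogonalProjectionOnto f : L2R)

/-- `r(x) = x·χ_{[0,1)}(x)`. -/
def rf : ℝ → ℝ := fun x => Set.indicator (Set.Ico (0 : ℝ) 1) (fun y => y) x

/-- `l(x) = (1−x)·χ_{[0,1)}(x)`. -/
def lf : ℝ → ℝ := fun x => Set.indicator (Set.Ico (0 : ℝ) 1) (fun y => 1 - y) x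

/-- `q(x) = 4x(1−x)·χ_{[0,1)}(x)`. -/
def qf : ℝ → ℝ := fun x => Set.indicator (Set.Ico (0 : ℝ) 1) (fun y => 4 * y * (1 - y)) x

/-- `q₀^θ(x) = q(x/θ)`. -/
def q0f (θ : ℝ) : ℝ → ℝ := fun x => qf (x / θ)

/-- `q₁^θ(x) = q((x−θ)/(1−θ))`. -/
def q1f (θ : ℝ) : ℝ → ℝ := fun x => qf ((x - θ) / (1 - θ))

/-- `h^θ(x) = r(x/θ) + l((x−θ)/(1−θ))`. -/
def hF (θ : ℝ) : ℝ → ℝ := fun x => rf (x / θ) + lf ((x - θ) / (1 - θ))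

/-- `u₀ = (1−θ)²(2+3θ)q₀^θ + θ²(3θ−5)q₁^θ`. -/
def u0f (θ : ℝ) : ℝ → ℝ := fun x =>
  (1 - θ) ^ 2 * (2 + 3 * θ) * q0f θ x + θ ^ 2 * (3 * θ - 5) * q1f θ x

/-- `u₁ = (−2+3(θ−1)θ³)q₀^θ + (−2+3(θ−1)³θ)q₁^θ + (16/5 − 12(θ−1)²θ²)h^θ`. -/
def u1f (θ : ℝ) : ℝ → ℝ := fun x =>
  (-2 + 3 * (θ - 1) * θ ^ 3) * q0f θ x + (-2 + 3 * (θ - 1) ^ 3 * θ) * q1f θ x +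
    (16 / 5 - 12 * (θ - 1) ^ 2 * θ ^ 2) * hF θ x

/-- `c^θ`. -/
def cTheta (θ : ℝ) : ℝ :=
  (20 * (2 + θ * (9 + 13 * θ * (2 * θ - 3))) +
      4 * Real.sqrt 5 * (4 - 15 * (1 - θ) ^ 2 * θ ^ 2)) /
    (8 * (1 + 45 * (1 - θ) * θ))

/-- `z^θ := c^θ·u₀ + u₁`. -/
def zTf (θ : ℝ) : ℝ → ℝ := fun x => cTheta θ * u0f θ x + u1f θ x

end QuadWavelet

namespace KnotWavelet

open QuadWavelet

open Classical in
/-- Interpret a plain function as an element of `L²(J)`. -/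
def toL2 (J : Set ℝ) (f : ℝ → ℝ) : L2S J :=
  if h : MemLp f 2 (volume.restrict J) then h.toLp f else 0

/-- The spline space `S₂⁰(ks)`: continuous functions in `L²(J)` supported in `J` that are
polynomials of degree at most `2` on each interval `(a, a₊)`, `a ∈ ks`. -/
def S20 (J ks : Set ℝ) : Set (L2S J) :=
  {f | ∃ g : ℝ → ℝ, ContinuousOn g J ∧ (∀ x ∉ J, g x = 0) ∧
    (∀ a ∈ ks, ∃ q : Polynomial ℝ, q.degree ≤ (2 : WithBot ℕ) ∧
      ∀ x ∈ IooS ks a, g x = q.eval x) ∧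
    (⇑f : ℝ → ℝ) =ᵐ[volume.restrict J] g}

/-- `z_a := z^{θ_a} ∘ σ_a`, where `σ_a` is the affine map sending `a ↦ 0` and `a₊ ↦ 1`. -/
def zKnot (J ks : Set ℝ) (θ : ℝ → ℝ) (a : ℝ) : L2S J :=
  toL2 J fun x => zTf (θ a) ((x - a) / (succR ks a - a))

/-- `b_a := (1−θ_a)a + θ_a·a₊`. -/
def bpt (ks : Set ℝ) (θ : ℝ → ℝ) (a : ℝ) : ℝ := (1 - θ a) * a + θ a * succR ks a

/-- `𝐛(ks, θ) := {b_a : a ∈ ks, a < sup J}`. -/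
def bSet (J ks : Set ℝ) (θ : ℝ → ℝ) : Set ℝ :=
  {x | ∃ a ∈ ks, (∃ y ∈ J, a < y) ∧ x = bpt ks θ a}

/-- `V(ks, θ)`: the `L²(J)`-closure of `S₂⁰(ks) + span {z_a : a ∈ ks, a < sup J}`. -/
def Vq (J ks : Set ℝ) (θ : ℝ → ℝ) : Submodule ℝ (L2S J) :=
  (Submodule.span ℝ
    (S20 J ks ∪ {f | ∃ a ∈ ks, (∃ y ∈ J, a < y) ∧ f = zKnot J ks θ a})).topologicalClosure

end KnotWavelet

/-! Refining the knots only enlarges the spline space, since every interval between consecutive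
knots of `𝐚¹` lies inside one between consecutive knots of `𝐚⁰`. The generator `z_a` of
`V(𝐚⁰, θ⁰)` is continuous, vanishes outside `[a, a₊)` and is quadratic on `(a, b_a)` and on
`(b_a, a₊)`. If `(a, a₊)` contains a knot of `𝐚¹`, then `b_a ∈ 𝐚¹` and `z_a` is a spline over
`𝐚¹`. Otherwise `a₊` is also the successor of `a` in `𝐚¹`; as the intervals between consecutive
knots of `𝐚¹` are disjoint, `b_a ∈ 𝐛¹` forces `b_a = b¹_a`, so `θ¹_a = θ⁰_a` and `z_a` is a
generator of `V(𝐚¹, θ¹)`. -/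

section OrderTopology

variable {α : Type*} [TopologicalSpace α] [LinearOrder α] [OrderTopology α] {S : Set α} {x : α}

theorem IsGLB.mem_of_not_accPt (hx : IsGLB S x) (hS : S.Nonempty) (hacc : ¬AccPt x (𝓟 S)) :
    x ∈ S := by
  by_contra hxS
  exact hacc <| accPt_iff_frequently.2 <|
    (hx.frequently_nhds_mem hS).mono fun y hy => ⟨ne_of_mem_of_not_mem hy hxS, hy⟩

theorem IsLUB.mem_of_not_accPt (hx : IsLUB S x) (hS : S.Nonempty) (hacc : ¬AccPt x (𝓟 S)) :
    x ∈ S :=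
  IsGLB.mem_of_not_accPt (α := αᵒᵈ) hx hS hacc

end OrderTopology

namespace QuadWavelet

variable {θ t : ℝ}

theorem sub_div_sub_mem_Ico_iff {a s : ℝ} (h : a < s) :
    (t - a) / (s - a) ∈ Ico (0 : ℝ) 1 ↔ t ∈ Ico a s := by
  simp only [mem_Ico, le_div_iff₀ (sub_pos.2 h), div_lt_one (sub_pos.2 h), zero_mul, sub_nonneg,
    sub_lt_sub_iff_right]

theorem div_mem_Ico_iff (hθ : 0 < θ) : t / θ ∈ Ico (0 : ℝ) 1 ↔ t ∈ Ico 0 θ := by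
  simpa using sub_div_sub_mem_Ico_iff (t := t) hθ

theorem sub_div_mem_Ico_iff (hθ : θ < 1) :
    (t - θ) / (1 - θ) ∈ Ico (0 : ℝ) 1 ↔ t ∈ Ico θ 1 :=
  sub_div_sub_mem_Ico_iff hθ

theorem qf_eq_clamp : qf = fun x => 4 * max 0 (min x 1) * (1 - max 0 (min x 1)) := by
  ext x
  rcases lt_or_ge x 0 with h₀ | h₀
  · simp [qf, h₀.not_ge, max_eq_left (min_le_of_left_le h₀.le)]
  rcases lt_or_ge x 1 with h₁ | h₁
  · simp [qf, h₀, h₁, min_eq_left h₁.le]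
  · simp [qf, h₁.not_gt, min_eq_right h₁]

theorem hF_eq_tent (hθ : θ ∈ Ioo (0 : ℝ) 1) :
    hF θ = fun x => max 0 (min (x / θ) ((1 - x) / (1 - θ))) := by
  obtain ⟨h₀, h₁⟩ := hθ
  have h₁' : 0 < 1 - θ := sub_pos.2 h₁
  ext x
  simp only [hF, rf, lf, indicator_apply, div_mem_Ico_iff h₀, sub_div_mem_Ico_iff h₁, mem_Ico]
  split_ifs with hl hr hr
  · linarith [hl.2, hr.1]
  · rw [min_eq_left (by rw [div_le_div_iff₀ h₀ h₁']; nlinarith [hl.2]),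
      max_eq_right (div_nonneg hl.1 h₀.le), add_zero]
  · rw [min_eq_right (by rw [div_le_div_iff₀ h₁' h₀]; nlinarith [hr.1]),
      max_eq_right (div_nonneg (by linarith [hr.2]) h₁'.le)]
    field_simp
    ring
  · rcases lt_or_ge x 0 with hx | hx
    · simp [max_eq_left (min_le_of_left_le (div_neg_of_neg_of_pos hx h₀).le)]
    · have hx₁ : 1 ≤ x := not_lt.1 fun h => hr ⟨not_lt.1 fun h' => hl ⟨hx, h'⟩, h⟩
      have hneg : (1 - x) / (1 - θ) ≤ 0 := div_nonpos_of_nonpos_of_nonneg (by linarith) h₁'.le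
      simp [max_eq_left (min_le_of_right_le hneg)]

theorem continuous_zTf (hθ : θ ∈ Ioo (0 : ℝ) 1) : Continuous (zTf θ) := by
  have hq : Continuous qf := by rw [qf_eq_clamp]; fun_prop
  have hh : Continuous (hF θ) := by rw [hF_eq_tent hθ]; fun_prop
  have hq₀ : Continuous (q0f θ) := hq.comp (by fun_prop)
  have hq₁ : Continuous (q1f θ) := hq.comp (by fun_prop)
  unfold zTf u0f u1f
  fun_prop

theorem zTf_eq_zero (hθ : θ ∈ Ioo (0 : ℝ) 1) (ht : t ∉ Ico (0 : ℝ) 1) : zTf θ t = 0 := by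
  have h₀ : t / θ ∉ Ico (0 : ℝ) 1 := by
    rw [div_mem_Ico_iff hθ.1]; exact fun h => ht ⟨h.1, h.2.trans hθ.2⟩
  have h₁ : (t - θ) / (1 - θ) ∉ Ico (0 : ℝ) 1 := by
    rw [sub_div_mem_Ico_iff hθ.2]; exact fun h => ht ⟨hθ.1.le.trans h.1, h.2⟩
  simp [zTf, u0f, u1f, q0f, q1f, hF, qf, rf, lf, h₀, h₁]

open Polynomial

/-- The condition imposed by `S20` on each interval between consecutive knots. -/
def IsQuadraticOn (g : ℝ → ℝ) (s : Set ℝ) : Prop :=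
  ∃ p : ℝ[X], p.degree ≤ 2 ∧ ∀ x ∈ s, g x = p.eval x

variable {g : ℝ → ℝ} {s s' : Set ℝ}

theorem IsQuadraticOn.mono (h : IsQuadraticOn g s) (hs : s' ⊆ s) : IsQuadraticOn g s' :=
  let ⟨p, hp, hg⟩ := h
  ⟨p, hp, fun x hx => hg x (hs hx)⟩

theorem isQuadraticOn_of_eqOn_zero (h : EqOn g 0 s) : IsQuadraticOn g s :=
  ⟨0, by simp, fun x hx => by simpa using h hx⟩

theorem IsQuadraticOn.comp_affine (h : IsQuadraticOn g s) (c d : ℝ) :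
    IsQuadraticOn (fun x => g ((x - c) / d)) ((fun x => (x - c) / d) ⁻¹' s) := by
  obtain ⟨p, hp, hg⟩ := h
  refine ⟨p.comp (C d⁻¹ * (X - C c)), ?_, fun x hx => (hg _ hx).trans (by simp [div_eq_inv_mul])⟩
  have hp' : p.natDegree ≤ 2 := natDegree_le_iff_degree_le.2 hp
  refine natDegree_le_iff_degree_le.1 ?_
  calc _ ≤ p.natDegree * (C d⁻¹ * (X - C c)).natDegree := natDegree_comp_le
    _ ≤ 2 * 1 := Nat.mul_le_mul hp' (by compute_degree!)

/-- On `(0, θ)` only `q₀^θ` and `r(x/θ)` are nonzero. -/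
theorem isQuadraticOn_zTf_left (hθ : θ ∈ Ioo (0 : ℝ) 1) : IsQuadraticOn (zTf θ) (Ioo 0 θ) := by
  refine ⟨C (cTheta θ * ((1 - θ) ^ 2 * (2 + 3 * θ)) + (-2 + 3 * (θ - 1) * θ ^ 3)) *
      (4 * (C θ⁻¹ * X) * (1 - C θ⁻¹ * X)) + C (16 / 5 - 12 * (θ - 1) ^ 2 * θ ^ 2) * (C θ⁻¹ * X),
    by compute_degree!, fun t ht => ?_⟩
  have h₀ : t / θ ∈ Ico (0 : ℝ) 1 := (div_mem_Ico_iff hθ.1).2 (Ioo_subset_Ico_self ht)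
  have h₁ : (t - θ) / (1 - θ) ∉ Ico (0 : ℝ) 1 := by
    rw [sub_div_mem_Ico_iff hθ.2]; exact fun h => h.1.not_gt ht.2
  simp [zTf, u0f, u1f, q0f, q1f, hF, qf, rf, lf, h₀, h₁]
  ring

/-- On `(θ, 1)` only `q₁^θ` and `l((x - θ)/(1 - θ))` are nonzero. -/
theorem isQuadraticOn_zTf_right (hθ : θ ∈ Ioo (0 : ℝ) 1) : IsQuadraticOn (zTf θ) (Ioo θ 1) := by
  refine ⟨C (cTheta θ * (θ ^ 2 * (3 * θ - 5)) + (-2 + 3 * (θ - 1) ^ 3 * θ)) *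
      (4 * (C (1 - θ)⁻¹ * (X - C θ)) * (1 - C (1 - θ)⁻¹ * (X - C θ))) +
      C (16 / 5 - 12 * (θ - 1) ^ 2 * θ ^ 2) * (1 - C (1 - θ)⁻¹ * (X - C θ)),
    by compute_degree!, fun t ht => ?_⟩
  have h₀ : t / θ ∉ Ico (0 : ℝ) 1 := by
    rw [div_mem_Ico_iff hθ.1]; exact fun h => h.2.not_gt ht.1
  have h₁ : (t - θ) / (1 - θ) ∈ Ico (0 : ℝ) 1 :=
    (sub_div_mem_Ico_iff hθ.2).2 (Ioo_subset_Ico_self ht)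
  simp [zTf, u0f, u1f, q0f, q1f, hF, qf, rf, lf, h₀, h₁]
  ring

end QuadWavelet

namespace KnotWavelet

open QuadWavelet

variable {J ks ks₀ ks₁ S : Set ℝ} {g : ℝ → ℝ} {θ₀ θ₁ : ℝ → ℝ} {a a' b c p s s' x y θ : ℝ}

theorem IsKnotSeq.mem_of_isGLB (h : IsKnotSeq J ks) (hS : S ⊆ ks) (hne : S.Nonempty)
    (hx : IsGLB S x) (hxJ : x ∈ J) : x ∈ S :=
  hx.mem_of_not_accPt hne fun hacc => h.noCluster x hxJ (hacc.mono (principal_mono.2 hS))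

theorem IsKnotSeq.mem_of_isLUB (h : IsKnotSeq J ks) (hS : S ⊆ ks) (hne : S.Nonempty)
    (hx : IsLUB S x) (hxJ : x ∈ J) : x ∈ S :=
  hx.mem_of_not_accPt hne fun hacc => h.noCluster x hxJ (hacc.mono (principal_mono.2 hS))

theorem IsKnotSeq.exists_gt (h : IsKnotSeq J ks) (hy : y ∈ J) (hay : a < y) :
    ∃ b ∈ ks, a < b := by
  have : (a : EReal) < sSup ((fun x : ℝ => (x : EReal)) '' ks) := by
    rw [h.sup_eq]
    exact (EReal.coe_lt_coe_iff.2 hay).trans_le (le_sSup (mem_image_of_mem _ hy))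
  obtain ⟨_, ⟨b, hb, rfl⟩, hab⟩ := lt_sSup_iff.1 this
  exact ⟨b, hb, EReal.coe_lt_coe_iff.1 hab⟩

theorem IsKnotSeq.exists_le (h : IsKnotSeq J ks) (ha : a ∈ J) : ∃ b ∈ ks, b ≤ a := by
  by_contra! hgt
  have hglb : IsGLB ks a := by
    refine ⟨fun b hb => (hgt b hb).le, fun c hc => EReal.coe_le_coe_iff.1 ?_⟩
    calc (c : EReal) ≤ sInf ((fun x : ℝ => (x : EReal)) '' ks) :=
          le_sInf (forall_mem_image.2 fun b hb => EReal.coe_le_coe_iff.2 (hc hb))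
      _ = sInf ((fun x : ℝ => (x : EReal)) '' J) := h.inf_eq
      _ ≤ a := sInf_le (mem_image_of_mem _ ha)
  obtain ⟨b, -, -, hb, -⟩ := h.nontrivial
  exact (hgt a (h.mem_of_isGLB subset_rfl ⟨b, hb⟩ hglb ha)).false

theorem IsKnotSeq.isSucc_succR (hJ : J.OrdConnected) (h : IsKnotSeq J ks) (ha : a ∈ ks)
    (hb : ∃ b ∈ ks, a < b) : IsSucc ks a (succR ks a) := by
  obtain ⟨b, hb, hab⟩ := hb
  have hbdd : BddBelow {b ∈ ks | a < b} := ⟨a, fun _ hc => hc.2.le⟩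
  have hne : {b ∈ ks | a < b}.Nonempty := ⟨b, hb, hab⟩
  have hmem : succR ks a ∈ {b ∈ ks | a < b} :=
    h.mem_of_isGLB (sep_subset _ _) hne (isGLB_csInf hne hbdd) <|
      hJ.out (h.subset ha) (h.subset hb) ⟨le_csInf hne fun _ hc => hc.2.le, csInf_le hbdd ⟨hb, hab⟩⟩
  exact ⟨ha, hmem.1, hmem.2, fun c hc =>
    (le_or_gt c a).imp_right fun hac => csInf_le hbdd ⟨hc, hac⟩⟩

theorem IsKnotSeq.exists_isGreatest_le (hJ : J.OrdConnected) (h : IsKnotSeq J ks) (ha : a ∈ J) :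
    ∃ c, IsGreatest {b ∈ ks | b ≤ a} c := by
  obtain ⟨b, hb, hba⟩ := h.exists_le ha
  have hbdd : BddAbove {b ∈ ks | b ≤ a} := ⟨a, fun _ hc => hc.2⟩
  have hne : {b ∈ ks | b ≤ a}.Nonempty := ⟨b, hb, hba⟩
  refine ⟨_, h.mem_of_isLUB (sep_subset _ _) hne (isLUB_csSup hne hbdd) ?_,
    fun _ hc => le_csSup hbdd hc⟩
  exact hJ.out (h.subset hb) ha ⟨le_csSup hbdd ⟨hb, hba⟩, csSup_le hne fun _ hc => hc.2⟩

theorem IsSucc.succR_eq (h : IsSucc ks a s) : succR ks a = s :=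
  IsLeast.csInf_eq ⟨⟨h.2.1, h.2.2.1⟩, fun b hb => (h.2.2.2 b hb.1).resolve_left hb.2.not_ge⟩

theorem IsSucc.of_subset (h : IsSucc ks₀ a s) (hsub : ks₀ ⊆ ks₁)
    (hgap : Ioo a s ∩ ks₁ = ∅) : IsSucc ks₁ a s := by
  refine ⟨hsub h.1, hsub h.2.1, h.2.2.1, fun b hb => ?_⟩
  by_contra! hb'
  exact eq_empty_iff_forall_notMem.1 hgap b ⟨hb', hb⟩

theorem IsSucc.eq_of_mem_Ioo (h : IsSucc ks a s) (h' : IsSucc ks a' s') (hx : x ∈ Ioo a s)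
    (hx' : x ∈ Ioo a' s') : a = a' ∧ s = s' := by
  obtain ⟨ha, hs, -, hgap⟩ := h
  obtain ⟨ha', hs', -, hgap'⟩ := h'
  refine ⟨le_antisymm ?_ ?_, le_antisymm ?_ ?_⟩
  · exact (hgap' a ha).resolve_right (hx.1.trans hx'.2).not_ge
  · exact (hgap a' ha').resolve_right (hx'.1.trans hx.2).not_ge
  · exact (hgap s' hs').resolve_left (hx.1.trans hx'.2).not_ge
  · exact (hgap' s hs).resolve_left (hx'.1.trans hx.2).not_ge

theorem IsSucc.bpt_mem_Ioo {θ : ℝ → ℝ} (h : IsSucc ks a s) (hθ : θ a ∈ Ioo (0 : ℝ) 1) :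
    bpt ks θ a ∈ Ioo a s := by
  have has := h.2.2.1
  rw [bpt, h.succR_eq]
  constructor <;> nlinarith [hθ.1, hθ.2]

theorem IooS_subset_IooS (hca : c ≤ a) (h : {b ∈ ks₀ | c < b} ⊆ {b ∈ ks₁ | a < b}) :
    IooS ks₁ a ⊆ IooS ks₀ c :=
  fun _ hx => ⟨hca.trans_lt hx.1, hx.2.trans_le (sInf_le_sInf (image_mono h))⟩

theorem IooS_subset_Iio_or_Ioi (hp : p ∈ ks) (c : ℝ) : IooS ks c ⊆ Iio p ∨ IooS ks c ⊆ Ioi p := by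
  rcases lt_or_ge c p with hcp | hpc
  · exact Or.inl fun x hx =>
      EReal.coe_lt_coe_iff.1 (hx.2.trans_le (sInf_le (mem_image_of_mem _ ⟨hp, hcp⟩)))
  · exact Or.inr fun x hx => hpc.trans_lt hx.1

theorem isQuadraticOn_IooS (ha : a ∈ ks) (hb : b ∈ ks) (hs : s ∈ ks)
    (h₁ : IsQuadraticOn g (Iio a)) (h₂ : IsQuadraticOn g (Ioo a b))
    (h₃ : IsQuadraticOn g (Ioo b s)) (h₄ : IsQuadraticOn g (Ioi s)) (c : ℝ) :
    IsQuadraticOn g (IooS ks c) := by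
  rcases IooS_subset_Iio_or_Ioi ha c with hca | hca
  · exact h₁.mono hca
  rcases IooS_subset_Iio_or_Ioi hb c with hcb | hcb
  · exact h₂.mono fun x hx => ⟨hca hx, hcb hx⟩
  rcases IooS_subset_Iio_or_Ioi hs c with hcs | hcs
  · exact h₃.mono fun x hx => ⟨hcb hx, hcs hx⟩
  · exact h₄.mono hcs

theorem S20_mono (hJ : J.OrdConnected) (h₀ : IsKnotSeq J ks₀) (h₁ : IsKnotSeq J ks₁)
    (hsub : ks₀ ⊆ ks₁) : S20 J ks₀ ⊆ S20 J ks₁ := by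
  rintro f ⟨g, hgc, hg₀, hquad, hfg⟩
  refine ⟨g, hgc, hg₀, fun a ha => ?_, hfg⟩
  obtain ⟨c, ⟨hc, hca⟩, hmax⟩ := h₀.exists_isGreatest_le hJ (h₁.subset ha)
  refine IsQuadraticOn.mono (hquad c hc) (IooS_subset_IooS hca fun b ⟨hb, hcb⟩ => ⟨hsub hb, ?_⟩)
  exact lt_of_not_ge fun hba => (hmax ⟨hb, hba⟩).not_gt hcb

theorem toL2_mem_S20 (hg : Continuous g) (hcs : HasCompactSupport g) (hJ : ∀ x ∉ J, g x = 0)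
    (hquad : ∀ a ∈ ks, IsQuadraticOn g (IooS ks a)) : toL2 J g ∈ S20 J ks := by
  have hmem : MemLp g 2 (volume.restrict J) := (hg.memLp_of_hasCompactSupport hcs).restrict J
  refine ⟨g, hg.continuousOn, hJ, hquad, ?_⟩
  rw [toL2, dif_pos hmem]
  exact hmem.coeFn_toLp

theorem toL2_zTf_mem_S20 (hJ : J.OrdConnected) (hks : ks ⊆ J) (hθ : θ ∈ Ioo (0 : ℝ) 1)
    (has : a < s) (ha : a ∈ ks) (hs : s ∈ ks) (hb : (1 - θ) * a + θ * s ∈ ks) :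
    toL2 J (fun x => zTf θ ((x - a) / (s - a))) ∈ S20 J ks := by
  have hsa : 0 < s - a := sub_pos.2 has
  have hzero : ∀ x ∉ Ico a s, zTf θ ((x - a) / (s - a)) = 0 := fun x hx =>
    zTf_eq_zero hθ ((sub_div_sub_mem_Ico_iff has).not.2 hx)
  refine toL2_mem_S20 ((continuous_zTf hθ).comp (by fun_prop))
    (HasCompactSupport.intro isCompact_Icc fun x hx => hzero x fun h => hx (Ico_subset_Icc_self h))
    (fun x hx => hzero x fun h => hx (hJ.out (hks ha) (hks hs) (Ico_subset_Icc_self h)))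
    (fun _ _ => isQuadraticOn_IooS ha hb hs ?_ ?_ ?_ ?_ _)
  · exact isQuadraticOn_of_eqOn_zero fun x hx => hzero x fun h => not_le.2 hx h.1
  · refine ((isQuadraticOn_zTf_left hθ).comp_affine a (s - a)).mono fun x hx => ?_
    exact ⟨div_pos (sub_pos.2 hx.1) hsa, (div_lt_iff₀ hsa).2 (by linarith [hx.2])⟩
  · refine ((isQuadraticOn_zTf_right hθ).comp_affine a (s - a)).mono fun x hx => ?_
    exact ⟨(lt_div_iff₀ hsa).2 (by linarith [hx.1]), (div_lt_one hsa).2 (by linarith [hx.2])⟩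
  · exact isQuadraticOn_of_eqOn_zero fun x hx => hzero x fun h => not_le.2 h.2 hx.le

theorem zKnot_eq_of_bpt_mem_bSet (hJ : J.OrdConnected) (h₁ : IsKnotSeq J ks₁) (hsub : ks₀ ⊆ ks₁)
    (hsucc : IsSucc ks₀ a s) (hgap : Ioo a s ∩ ks₁ = ∅) (hθ₀ : θ₀ a ∈ Ioo (0 : ℝ) 1)
    (hθ₁ : ∀ c ∈ ks₁, θ₁ c ∈ Ioo (0 : ℝ) 1) (hb : bpt ks₀ θ₀ a ∈ bSet J ks₁ θ₁) :
    zKnot J ks₀ θ₀ a = zKnot J ks₁ θ₁ a := by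
  obtain ⟨a', ha', ⟨y, hy, hay⟩, hbb⟩ := hb
  have hsucc' := h₁.isSucc_succR hJ ha' (h₁.exists_gt hy hay)
  obtain ⟨rfl, hs⟩ := (hsucc.of_subset hsub hgap).eq_of_mem_Ioo hsucc'
    (hsucc.bpt_mem_Ioo hθ₀) (hbb ▸ hsucc'.bpt_mem_Ioo (hθ₁ a' ha'))
  rw [bpt, bpt, hsucc.succR_eq, ← hs] at hbb
  have hθ : θ₀ a = θ₁ a := by
    refine mul_right_cancel₀ (sub_pos.2 hsucc.2.2.1).ne' ?_
    linear_combination hbb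
  rw [zKnot, zKnot, hθ, hsucc.succR_eq, ← hs]

end KnotWavelet

open KnotWavelet in
theorem Vq_monotone
    (J : Set ℝ) (hJ : J.OrdConnected)
    (ks₀ ks₁ : Set ℝ) (h₀ : IsKnotSeq J ks₀) (h₁ : IsKnotSeq J ks₁) (hsub : ks₀ ⊆ ks₁)
    (θ₀ θ₁ : ℝ → ℝ)
    (hθ₀ : ∀ a ∈ ks₀, θ₀ a ∈ Set.Ioo (0 : ℝ) 1)
    (hθ₁ : ∀ a ∈ ks₁, θ₁ a ∈ Set.Ioo (0 : ℝ) 1)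
    (hcond : ∀ a ∈ ks₀, (∃ y ∈ J, a < y) →
      ((Set.Ioo a (succR ks₀ a) ∩ ks₁).Nonempty → bpt ks₀ θ₀ a ∈ ks₁) ∧
      (Set.Ioo a (succR ks₀ a) ∩ ks₁ = ∅ → bpt ks₀ θ₀ a ∈ bSet J ks₁ θ₁)) :
    Vq J ks₀ θ₀ ≤ Vq J ks₁ θ₁ := by
  refine Submodule.topologicalClosure_minimal _ ?_ (Submodule.isClosed_topologicalClosure _)
  refine Submodule.span_le.2 fun f hf =>
    Submodule.le_topologicalClosure _ (Submodule.subset_span ?_)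
  rcases hf with hf | ⟨a, ha, hy, rfl⟩
  · exact Or.inl (S20_mono hJ h₀ h₁ hsub hf)
  obtain ⟨y, hyJ, hay⟩ := hy
  have hsucc := h₀.isSucc_succR hJ ha (h₀.exists_gt hyJ hay)
  obtain ⟨hknot, hgen⟩ := hcond a ha ⟨y, hyJ, hay⟩
  rcases eq_empty_or_nonempty (Ioo a (succR ks₀ a) ∩ ks₁) with hgap | hne
  · rw [zKnot_eq_of_bpt_mem_bSet hJ h₁ hsub hsucc hgap (hθ₀ a ha) hθ₁ (hgen hgap)]
    exact Or.inr ⟨a, hsub ha, ⟨y, hyJ, hay⟩, rfl⟩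
  · exact Or.inl (toL2_zTf_mem_S20 hJ h₁.subset (hθ₀ a ha) hsucc.2.2.1 (hsub ha)
      (hsub hsucc.2.1) (hknot hne))
end
end

section
/- For every a ∈ 𝐚, the internal direct sum A_a⁻ ⊕ A_a⁺ equals the sum of subspaces S_a + T_a. -/
open MeasureTheory Set Filter

noncomputable section

namespace KnotWavelet

variable (J ks : Set ℝ)

open Classical in
/-- Multiplication by the characteristic function of `I`, as a linear map. -/
def indLM (I : Set ℝ) : L2S J →ₗ[ℝ] L2S J where
  toFun := indL2 J I
  map_add' f g := by
    unfold indL2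
    split_ifs with h
    · have hf := (Lp.memLp f).indicator h
      have hg := (Lp.memLp g).indicator h
      calc ((Lp.memLp (f + g)).indicator h).toLp (I.indicator ⇑(f + g))
          = (hf.add hg).toLp (I.indicator ⇑f + I.indicator ⇑g) := by
            refine MemLp.toLp_congr _ _ ?_
            filter_upwards [Lp.coeFn_add f g] with x hx
            by_cases hxI : x ∈ I
            · rw [Pi.add_apply, Set.indicator_of_mem hxI, Set.indicator_of_mem hxI,
                Set.indicator_of_mem hxI]
              exact hx
            · rw [Pi.add_apply, Set.indicator_of_notMem hxI, Set.indicator_of_notMem hxI,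
                Set.indicator_of_notMem hxI, add_zero]
        _ = hf.toLp (I.indicator ⇑f) + hg.toLp (I.indicator ⇑g) := MemLp.toLp_add hf hg
    · simp
  map_smul' c f := by
    unfold indL2
    split_ifs with h
    · have hf := (Lp.memLp f).indicator h
      calc ((Lp.memLp (c • f)).indicator h).toLp (I.indicator ⇑(c • f))
          = (hf.const_smul c).toLp (c • I.indicator ⇑f) := by
            refine MemLp.toLp_congr _ _ ?_
            filter_upwards [Lp.coeFn_smul c f] with x hx
            by_cases hxI : x ∈ I
            · rw [Pi.smul_apply, Set.indicator_of_mem hxI, Set.indicator_of_mem hxI]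
              exact hx
            · rw [Pi.smul_apply, Set.indicator_of_notMem hxI, Set.indicator_of_notMem hxI,
                smul_zero]
        _ = c • hf.toLp (I.indicator ⇑f) := MemLp.toLp_const_smul c hf
    · simp

/-- The image `χ_I · U` of a subspace under multiplication by the characteristic function of
`I`. -/
def chiMul (I : Set ℝ) (U : Submodule ℝ (L2S J)) : Submodule ℝ (L2S J) :=
  U.map (indLM J I)

/-- `V_a`, the subspace of members of `V` supported in `[a₋, a₊]`. -/
def Vmid (V : Submodule ℝ (L2S J)) (a : ℝ) : Submodule ℝ (L2S J) :=
  suppSub J V (IccPS ks a)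

/-- `V̆_a`, the subspace of members of `V` supported in `[a, a₊]`. -/
def Vbreve (V : Submodule ℝ (L2S J)) (a : ℝ) : Submodule ℝ (L2S J) :=
  suppSub J V (IccS ks a)

open Classical in
/-- `V̆_{a₋}` (the zero subspace if `a` has no predecessor in `ks`). -/
def VbrevePred (V : Submodule ℝ (L2S J)) (a : ℝ) : Submodule ℝ (L2S J) :=
  if {b ∈ ks | b < a}.Nonempty then suppSub J V (IccP ks a) else ⊥

/-- `V̄_a := (I − P_{V̆_{a₋} ⊕ V̆_a}) V_a`. -/
def Vbar (V : Submodule ℝ (L2S J)) (a : ℝ) : Submodule ℝ (L2S J) :=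
  oneSubProjSub (VbrevePred J ks V a ⊔ Vbreve J ks V a) (Vmid J ks V a)

/-- `A_a⁺ := P_{V̆¹_a} V̄⁰_a`. -/
def Aplus (V₀ V₁ : Submodule ℝ (L2S J)) (a : ℝ) : Submodule ℝ (L2S J) :=
  projSub (Vbreve J ks V₁ a) (Vbar J ks V₀ a)

/-- `A_a⁻ := P_{V̆¹_{a₋}} V̄⁰_a`. -/
def Aminus (V₀ V₁ : Submodule ℝ (L2S J)) (a : ℝ) : Submodule ℝ (L2S J) :=
  projSub (VbrevePred J ks V₁ a) (Vbar J ks V₀ a)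

/-- The wavelet space `W := V¹ ⊖ V⁰`, the orthogonal complement of `V⁰` in `V¹`. -/
def Wsp (V₀ V₁ : Submodule ℝ (L2S J)) : Submodule ℝ (L2S J) :=
  V₁ ⊓ V₀ᗮ

/-- `W̄_a := W_a ⊖ (W̆_{a₋} ⊕ W̆_a)`. -/
def Wbar (V₀ V₁ : Submodule ℝ (L2S J)) (a : ℝ) : Submodule ℝ (L2S J) :=
  Vmid J ks (Wsp J V₀ V₁) a ⊓
    (VbrevePred J ks (Wsp J V₀ V₁) a ⊔ Vbreve J ks (Wsp J V₀ V₁) a)ᗮ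

/-- `Y_a := V̄⁰_a ∩ V̄¹_a`. -/
def Ysp (V₀ V₁ : Submodule ℝ (L2S J)) (a : ℝ) : Submodule ℝ (L2S J) :=
  Vbar J ks V₀ a ⊓ Vbar J ks V₁ a

/-- `Y_a⁺ := (χ_{[a,a₊]}·V̄⁰_a) ∩ (χ_{[a,a₊]}·V̄¹_a)`. -/
def Yplus (V₀ V₁ : Submodule ℝ (L2S J)) (a : ℝ) : Submodule ℝ (L2S J) :=
  chiMul J (IccS ks a) (Vbar J ks V₀ a) ⊓ chiMul J (IccS ks a) (Vbar J ks V₁ a)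

/-- `Y_a⁻ := (χ_{[a₋,a]}·V̄⁰_a) ∩ (χ_{[a₋,a]}·V̄¹_a)`. -/
def Yminus (V₀ V₁ : Submodule ℝ (L2S J)) (a : ℝ) : Submodule ℝ (L2S J) :=
  chiMul J (IccP ks a) (Vbar J ks V₀ a) ⊓ chiMul J (IccP ks a) (Vbar J ks V₁ a)

/-- `X_a⁺ := (χ_{[a,a₊]}·V̄⁰_a) ⊖ Y_a⁺`. -/
def Xplus (V₀ V₁ : Submodule ℝ (L2S J)) (a : ℝ) : Submodule ℝ (L2S J) :=
  chiMul J (IccS ks a) (Vbar J ks V₀ a) ⊓ (Yplus J ks V₀ V₁ a)ᗮ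

/-- `X_a⁻ := (χ_{[a₋,a]}·V̄⁰_a) ⊖ Y_a⁻`. -/
def Xminus (V₀ V₁ : Submodule ℝ (L2S J)) (a : ℝ) : Submodule ℝ (L2S J) :=
  chiMul J (IccP ks a) (Vbar J ks V₀ a) ⊓ (Yminus J ks V₀ V₁ a)ᗮ

/-- `T_a := (I − P_{V̄¹_a}) V̄⁰_a`. -/
def Tsp (V₀ V₁ : Submodule ℝ (L2S J)) (a : ℝ) : Submodule ℝ (L2S J) :=
  oneSubProjSub (Vbar J ks V₁ a) (Vbar J ks V₀ a)

/-- `T_a⁻ := {f ∈ T_a : supp f ⊆ [a₋,a]}`. -/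
def Tminus (V₀ V₁ : Submodule ℝ (L2S J)) (a : ℝ) : Submodule ℝ (L2S J) :=
  suppSub J (Tsp J ks V₀ V₁ a) (IccP ks a)

/-- `T_a⁺ := {f ∈ T_a : supp f ⊆ [a,a₊]}`. -/
def Tplus (V₀ V₁ : Submodule ℝ (L2S J)) (a : ℝ) : Submodule ℝ (L2S J) :=
  suppSub J (Tsp J ks V₀ V₁ a) (IccS ks a)

/-- `U_a := T_a ⊖ (T_a⁻ ⊕ T_a⁺)`. -/
def Usp (V₀ V₁ : Submodule ℝ (L2S J)) (a : ℝ) : Submodule ℝ (L2S J) :=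
  Tsp J ks V₀ V₁ a ⊓ (Tminus J ks V₀ V₁ a ⊔ Tplus J ks V₀ V₁ a)ᗮ

/-- `S_a := (χ_{[a,a₊]} − χ_{[a₋,a]})·U_a`. -/
def Ssp (V₀ V₁ : Submodule ℝ (L2S J)) (a : ℝ) : Submodule ℝ (L2S J) :=
  (Usp J ks V₀ V₁ a).map (indLM J (IccS ks a) - indLM J (IccP ks a))

/-- `Ŵ_a := (I − P_{V̄⁰_a}) V̄¹_a`. -/
def What (V₀ V₁ : Submodule ℝ (L2S J)) (a : ℝ) : Submodule ℝ (L2S J) :=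
  oneSubProjSub (Vbar J ks V₀ a) (Vbar J ks V₁ a)

/-- `W̃_a := W̄_a ⊖ Ŵ_a`. -/
def Wtilde (V₀ V₁ : Submodule ℝ (L2S J)) (a : ℝ) : Submodule ℝ (L2S J) :=
  Wbar J ks V₀ V₁ a ⊓ (What J ks V₀ V₁ a)ᗮ

end KnotWavelet

/-!
For `f ∈ V̄⁰_a` we have `f ∈ V¹_a`, and `V̄¹_a = (I − P_B) V¹_a` with `B = V̆¹_{a₋} ⊕ V̆¹_a`,
so `(I − P_{V̄¹_a}) f = P_B f = u + w` with `u := P_{V̆¹_{a₋}} f` supported in `[a₋, a]` and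
`w := P_{V̆¹_a} f` supported in `[a, a₊]`. Thus `T_a`, `A_a⁻`, `A_a⁺` are the images of `V̄⁰_a`
under `f ↦ u + w`, `f ↦ u`, `f ↦ w`, and the reflection `D := χ_{[a,a₊]} − χ_{[a₋,a]}` sends
`u + w` to `w − u`; hence `A_a⁻ + A_a⁺ = T_a + D T_a`. Since `T_a` is finite-dimensional
(`Φ⁰` is orthogonal and locally finite), `T_a = U_a ⊕ T_a⁻ ⊕ T_a⁺`, and `D = ∓1` on `T_a^∓`
gives `D T_a ⊆ S_a + T_a ⊆ D T_a + T_a`. The sum `A_a⁻ + A_a⁺` is direct because the two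
supports meet only in the null set `{a}`.
-/

open scoped InnerProductSpace

namespace KnotWavelet

section Hilbert

variable {H : Type*} [NormedAddCommGroup H] [InnerProductSpace ℝ H] [CompleteSpace H]
  {K K₁ K₂ M : Submodule ℝ H}

theorem projL_mem_topologicalClosure (K : Submodule ℝ H) (f : H) :
    projL K f ∈ K.topologicalClosure :=
  K.topologicalClosure.starProjection_apply_mem f

theorem projL_mem_of_le (hKM : K ≤ M) (hM : IsClosed (M : Set H)) (f : H) : projL K f ∈ M :=
  K.topologicalClosure_minimal hKM hM (projL_mem_topologicalClosure K f)

theorem sub_projL_mem_orthogonal (K : Submodule ℝ H) (f : H) : f - projL K f ∈ Kᗮ := by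
  rw [← K.orthogonal_closure]
  exact K.topologicalClosure.sub_starProjection_mem_orthogonal f

theorem projL_eq_of_sub_mem_orthogonal {f u : H} (hu : u ∈ K.topologicalClosure)
    (h : f - u ∈ Kᗮ) : projL K f = u := by
  rw [← K.orthogonal_closure] at h
  exact K.topologicalClosure.eq_starProjection_of_mem_orthogonal hu h

theorem projL_sup_of_isOrtho (h : K₁ ⟂ K₂) (f : H) :
    projL (K₁ ⊔ K₂) f = projL K₁ f + projL K₂ f := by
  have h₂₁ : projL K₂ f ∈ K₁ᗮ :=
    projL_mem_of_le (Submodule.isOrtho_iff_le.1 h.symm) K₁.isClosed_orthogonal f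
  have h₁₂ : projL K₁ f ∈ K₂ᗮ :=
    projL_mem_of_le (Submodule.isOrtho_iff_le.1 h) K₂.isClosed_orthogonal f
  refine projL_eq_of_sub_mem_orthogonal (add_mem ?_ ?_) ?_
  · exact Submodule.topologicalClosure_mono le_sup_left (projL_mem_topologicalClosure K₁ f)
  · exact Submodule.topologicalClosure_mono le_sup_right (projL_mem_topologicalClosure K₂ f)
  rw [← Submodule.inf_orthogonal]
  refine Submodule.mem_inf.2 ⟨?_, ?_⟩
  · simpa only [sub_add_eq_sub_sub] using sub_mem (sub_projL_mem_orthogonal K₁ f) h₂₁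
  · simpa only [sub_add_eq_sub_sub_swap] using sub_mem (sub_projL_mem_orthogonal K₂ f) h₁₂

/-- On `M`, the projection onto `(I − P_B) M` is `I − P_B`, because `(I − P_B) M ⊆ Bᗮ`. -/
theorem projL_oneSubProjSub_of_mem (B : Submodule ℝ H) {f : H} (hf : f ∈ M) :
    projL (oneSubProjSub B M) f = f - projL B f := by
  refine projL_eq_of_sub_mem_orthogonal
    (Submodule.le_topologicalClosure _ ⟨f, hf, rfl⟩) ?_
  rw [sub_sub_cancel, Submodule.mem_orthogonal]
  rintro _ ⟨g, -, rfl⟩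
  refine Submodule.inner_left_of_mem_orthogonal (projL_mem_topologicalClosure B f) ?_
  rw [B.orthogonal_closure]
  exact sub_projL_mem_orthogonal B g

theorem mem_topologicalClosure_span_of_inner_eq_zero {Φ F : Set H}
    (hΦ : Φ.Pairwise fun φ ψ => ⟪φ, ψ⟫_ℝ = 0) (hF : F ⊆ Φ) {f : H}
    (hf : f ∈ (Submodule.span ℝ Φ).topologicalClosure) (hperp : ∀ φ ∈ Φ \ F, ⟪f, φ⟫_ℝ = 0) :
    f ∈ (Submodule.span ℝ F).topologicalClosure := by
  set K := Submodule.span ℝ F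
  set g := f - projL K f
  have hg_perp : ∀ φ ∈ Φ, ⟪g, φ⟫_ℝ = 0 := by
    intro φ hφ
    by_cases hφF : φ ∈ F
    · exact Submodule.inner_left_of_mem_orthogonal (Submodule.subset_span hφF)
        (sub_projL_mem_orthogonal K f)
    have hKφ : K ≤ (ℝ ∙ φ)ᗮ := Submodule.span_le.2 fun ψ hψ =>
      Submodule.mem_orthogonal_singleton_iff_inner_right.2
        (hΦ hφ (hF hψ) fun h => hφF (h ▸ hψ))
    have hproj : ⟪projL K f, φ⟫_ℝ = 0 := Submodule.mem_orthogonal_singleton_iff_inner_left.1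
      (projL_mem_of_le hKφ (Submodule.isClosed_orthogonal _) f)
    rw [inner_sub_left, hperp φ ⟨hφ, hφF⟩, hproj, sub_zero]
  have hΦg : (Submodule.span ℝ Φ).topologicalClosure ≤ (ℝ ∙ g)ᗮ :=
    Submodule.topologicalClosure_minimal _ (Submodule.span_le.2 fun φ hφ =>
      Submodule.mem_orthogonal_singleton_iff_inner_right.2 (hg_perp φ hφ))
      (Submodule.isClosed_orthogonal _)
  have hgΦ : g ∈ (Submodule.span ℝ Φ).topologicalClosure :=
    sub_mem hf (Submodule.topologicalClosure_mono (Submodule.span_mono hF)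
      (projL_mem_topologicalClosure K f))
  have hg : g = 0 :=
    inner_self_eq_zero.1 (Submodule.mem_orthogonal_singleton_iff_inner_right.1 (hΦg hgΦ))
  rw [sub_eq_zero.1 hg]
  exact projL_mem_topologicalClosure K f

end Hilbert

section Reflection

variable {R M : Type*} [Ring R] [AddCommGroup M] [Module R M]

theorem map_le_map_sup_of_le_sup {T U N₁ N₂ : Submodule R M} {D : M →ₗ[R] M}
    (hT : T ≤ U ⊔ (N₁ ⊔ N₂)) (hN : N₁ ⊔ N₂ ≤ T) (h₁ : ∀ x ∈ N₁, D x = -x)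
    (h₂ : ∀ x ∈ N₂, D x = x) : T.map D ≤ U.map D ⊔ T := by
  have hN₁ : N₁.map D ≤ N₁ := Submodule.map_le_iff_le_comap.2 fun x hx => by
    simpa [Submodule.mem_comap, h₁ x hx] using hx
  have hN₂ : N₂.map D ≤ N₂ := Submodule.map_le_iff_le_comap.2 fun x hx => by
    simpa [Submodule.mem_comap, h₂ x hx] using hx
  calc T.map D ≤ (U ⊔ (N₁ ⊔ N₂)).map D := Submodule.map_mono hT
    _ = U.map D ⊔ (N₁.map D ⊔ N₂.map D) := by rw [Submodule.map_sup, Submodule.map_sup]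
    _ ≤ U.map D ⊔ T := sup_le_sup_left ((sup_le_sup hN₁ hN₂).trans hN) _

/-- `p x` and `q x` are recovered as `⅟2 • (r x ∓ D (r x))`. -/
theorem map_sup_map_eq_map_sup_map [Invertible (2 : R)] {X U : Submodule R M}
    {p q r D : M →ₗ[R] M} (hr : ∀ x ∈ X, r x = p x + q x) (hDp : ∀ x ∈ X, D (p x) = -p x)
    (hDq : ∀ x ∈ X, D (q x) = q x) (hU : U ≤ X.map r)
    (hD : (X.map r).map D ≤ U.map D ⊔ X.map r) :
    X.map p ⊔ X.map q = U.map D ⊔ X.map r := by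
  have hDr : ∀ x ∈ X, D (r x) = q x - p x := fun x hx => by
    rw [hr x hx, map_add, hDp x hx, hDq x hx, neg_add_eq_sub]
  have hr_mem : ∀ x ∈ X, r x ∈ U.map D ⊔ X.map r := fun x hx =>
    Submodule.mem_sup_right ⟨x, hx, rfl⟩
  have hDr_mem : ∀ x ∈ X, D (r x) ∈ U.map D ⊔ X.map r := fun x hx =>
    hD ⟨r x, ⟨x, hx, rfl⟩, rfl⟩
  apply le_antisymm
  · refine sup_le (Submodule.map_le_iff_le_comap.2 fun x hx => ?_)
      (Submodule.map_le_iff_le_comap.2 fun x hx => ?_)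
    · have hp : p x = (⅟2 : R) • (r x - D (r x)) := by
        rw [hDr x hx, hr x hx,
          show p x + q x - (q x - p x) = (2 : R) • p x by rw [two_smul]; abel, invOf_smul_smul]
      simpa only [Submodule.mem_comap, hp] using
        Submodule.smul_mem _ _ (sub_mem (hr_mem x hx) (hDr_mem x hx))
    · have hq : q x = (⅟2 : R) • (r x + D (r x)) := by
        rw [hDr x hx, hr x hx,
          show p x + q x + (q x - p x) = (2 : R) • q x by rw [two_smul]; abel, invOf_smul_smul]
      simpa only [Submodule.mem_comap, hq] using
        Submodule.smul_mem _ _ (add_mem (hr_mem x hx) (hDr_mem x hx))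
  · refine sup_le ((Submodule.map_mono hU).trans ?_) ?_
    · rintro _ ⟨_, ⟨x, hx, rfl⟩, rfl⟩
      rw [hDr x hx]
      exact sub_mem (Submodule.mem_sup_right ⟨x, hx, rfl⟩)
        (Submodule.mem_sup_left ⟨x, hx, rfl⟩)
    · rintro _ ⟨x, hx, rfl⟩
      rw [hr x hx]
      exact add_mem (Submodule.mem_sup_left ⟨x, hx, rfl⟩) (Submodule.mem_sup_right ⟨x, hx, rfl⟩)

end Reflection

section Support

variable {J : Set ℝ} {I I' : Set ℝ} {V W : Submodule ℝ (L2S J)} {f : L2S J}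

theorem mem_suppSub_top : f ∈ suppSub J ⊤ I ↔ SuppIn J f I := and_iff_right trivial

theorem suppSub_le_self (V : Submodule ℝ (L2S J)) (I : Set ℝ) : suppSub J V I ≤ V :=
  fun _ hf => hf.1

theorem suppSub_mono (hV : V ≤ W) (hI : I ⊆ I') : suppSub J V I ≤ suppSub J W I' :=
  fun _ hf => ⟨hV hf.1, hf.2.mono fun _ h hxI' => h fun hxI => hxI' (hI hxI)⟩

theorem indL2_coeFn (hI : MeasurableSet I) (f : L2S J) :
    indL2 J I f =ᵐ[volume.restrict J] I.indicator f := by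
  rw [indL2, dif_pos hI]
  exact MemLp.coeFn_toLp _

theorem norm_indL2_le (I : Set ℝ) (f : L2S J) : ‖indL2 J I f‖ ≤ ‖f‖ := by
  unfold indL2
  split_ifs
  · rw [Lp.norm_toLp, Lp.norm_def]
    exact ENNReal.toReal_mono (Lp.eLpNorm_lt_top f).ne (eLpNorm_indicator_le _)
  · simp

theorem indL2_of_suppIn (hI : MeasurableSet I) (hf : SuppIn J f I) : indL2 J I f = f := by
  apply Lp.ext
  filter_upwards [indL2_coeFn hI f, hf] with x hx hfx
  by_cases hxI : x ∈ I
  · rw [hx, Set.indicator_of_mem hxI]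
  · rw [hx, Set.indicator_of_notMem hxI, hfx hxI]

theorem indL2_eq_zero_of_suppIn (hI : MeasurableSet I) (hf : SuppIn J f I')
    (hII' : ∀ᵐ x ∂(volume.restrict J), x ∉ I ∩ I') : indL2 J I f = 0 := by
  rw [Lp.eq_zero_iff_ae_eq_zero]
  filter_upwards [indL2_coeFn hI f, hf, hII'] with x hx hfx hxII'
  by_cases hxI : x ∈ I
  · rw [hx, Set.indicator_of_mem hxI, hfx fun hxI' => hxII' ⟨hxI, hxI'⟩, Pi.zero_apply]
  · rw [hx, Set.indicator_of_notMem hxI, Pi.zero_apply]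

theorem suppIn_iff_indL2_compl_eq_zero (hI : MeasurableSet I) :
    SuppIn J f I ↔ indL2 J Iᶜ f = 0 := by
  rw [Lp.eq_zero_iff_ae_eq_zero]
  refine eventually_congr ((indL2_coeFn hI.compl f).mono fun x hx => ?_)
  by_cases hxI : x ∈ I <;> simp [hx, hxI]

theorem isClosed_suppSub_top (hI : MeasurableSet I) :
    IsClosed (suppSub J ⊤ I : Set (L2S J)) := by
  have hcont : Continuous (indLM J Iᶜ) :=
    AddMonoidHomClass.continuous_of_bound (indLM J Iᶜ) 1 fun f => by
      rw [one_mul]; exact norm_indL2_le Iᶜ f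
  have hset : (suppSub J ⊤ I : Set (L2S J)) = indLM J Iᶜ ⁻¹' {0} := by
    ext f
    exact mem_suppSub_top.trans (suppIn_iff_indL2_compl_eq_zero hI)
  rw [hset]
  exact isClosed_singleton.preimage hcont

theorem isClosed_suppSub (hV : IsClosed (V : Set (L2S J))) (hI : MeasurableSet I) :
    IsClosed (suppSub J V I : Set (L2S J)) := by
  have hinf : suppSub J V I = V ⊓ suppSub J ⊤ I :=
    Submodule.ext fun _ => and_congr_right fun _ => mem_suppSub_top.symm
  rw [hinf, Submodule.coe_inf]
  exact hV.inter (isClosed_suppSub_top hI)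

theorem isOrtho_suppSub (hII' : ∀ᵐ x ∂(volume.restrict J), x ∉ I ∩ I')
    (V W : Submodule ℝ (L2S J)) : suppSub J V I ⟂ suppSub J W I' := by
  rw [Submodule.isOrtho_iff_inner_eq]
  intro f hf g hg
  have hfg : (fun x => ⟪f x, g x⟫_ℝ) =ᵐ[volume.restrict J] 0 := by
    filter_upwards [hf.2, hg.2, hII'] with x hfx hgx hxII'
    by_cases hxI : x ∈ I
    · simp [hgx fun hxI' => hxII' ⟨hxI, hxI'⟩]
    · simp [hfx hxI]
  rw [MeasureTheory.L2.inner_def, integral_congr_ae hfg, Pi.zero_def, integral_zero]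

end Support

section Intervals

variable {J : Set ℝ} (ks : Set ℝ) (a : ℝ)

theorem measurableSet_IccP : MeasurableSet (IccP ks a) :=
  (measurableSet_Ici.preimage continuous_coe_real_ereal.measurable).inter measurableSet_Iic

theorem measurableSet_IccS : MeasurableSet (IccS ks a) :=
  measurableSet_Ici.inter (measurableSet_Iic.preimage continuous_coe_real_ereal.measurable)

theorem measurableSet_IccPS : MeasurableSet (IccPS ks a) :=
  measurableSet_Icc.preimage continuous_coe_real_ereal.measurable

theorem predE_le_coe : predE ks a ≤ a :=
  sSup_le <| by
    rintro _ ⟨b, hb, rfl⟩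
    exact EReal.coe_le_coe_iff.2 hb.2.le

theorem coe_le_succE : (a : EReal) ≤ succE ks a :=
  le_sInf <| by
    rintro _ ⟨b, hb, rfl⟩
    exact EReal.coe_le_coe_iff.2 hb.2.le

theorem IccP_subset_IccPS : IccP ks a ⊆ IccPS ks a :=
  fun _ hx => ⟨hx.1, (EReal.coe_le_coe_iff.2 hx.2).trans (coe_le_succE ks a)⟩

theorem IccS_subset_IccPS : IccS ks a ⊆ IccPS ks a :=
  fun _ hx => ⟨(predE_le_coe ks a).trans (EReal.coe_le_coe_iff.2 hx.1), hx.2⟩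

theorem ae_notMem_IccP_inter_IccS :
    ∀ᵐ x ∂(volume.restrict J), x ∉ IccP ks a ∩ IccS ks a := by
  filter_upwards [(volume.restrict J).ae_ne a] with x hxa hx
  exact hxa (le_antisymm hx.1.2 hx.2.1)

theorem ae_notMem_IccS_inter_IccP :
    ∀ᵐ x ∂(volume.restrict J), x ∉ IccS ks a ∩ IccP ks a := by
  filter_upwards [ae_notMem_IccP_inter_IccS (J := J) ks a] with x hx h
  exact hx h.symm

end Intervals

section KnotSeq

variable {J ks : Set ℝ} {a : ℝ}

theorem exists_le_of_predE_le (hks : IsKnotSeq J ks) (ha : a ∈ ks) :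
    ∃ l ∈ J, ∀ x ∈ J, predE ks a ≤ x → l ≤ x := by
  by_cases hpred : ∃ b ∈ ks, b < a
  · obtain ⟨b, hb, hba⟩ := hpred
    have hb_le : (b : EReal) ≤ predE ks a := le_sSup ⟨b, ⟨hb, hba⟩, rfl⟩
    exact ⟨b, hks.subset hb, fun x _ hx => EReal.coe_le_coe_iff.1 (hb_le.trans hx)⟩
  · push Not at hpred
    refine ⟨a, hks.subset ha, fun x hx _ => EReal.coe_le_coe_iff.1 ?_⟩
    calc (a : EReal) ≤ sInf ((fun x : ℝ => (x : EReal)) '' ks) :=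
          le_sInf <| by
            rintro _ ⟨b, hb, rfl⟩
            exact EReal.coe_le_coe_iff.2 (hpred b hb)
      _ = sInf ((fun x : ℝ => (x : EReal)) '' J) := hks.inf_eq
      _ ≤ x := sInf_le ⟨x, hx, rfl⟩

theorem exists_le_of_le_succE (hks : IsKnotSeq J ks) (ha : a ∈ ks) :
    ∃ r ∈ J, ∀ x ∈ J, (x : EReal) ≤ succE ks a → x ≤ r := by
  by_cases hsucc : ∃ b ∈ ks, a < b
  · obtain ⟨b, hb, hab⟩ := hsucc
    have hb_ge : succE ks a ≤ b := sInf_le ⟨b, ⟨hb, hab⟩, rfl⟩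
    exact ⟨b, hks.subset hb, fun x _ hx => EReal.coe_le_coe_iff.1 (hx.trans hb_ge)⟩
  · push Not at hsucc
    refine ⟨a, hks.subset ha, fun x hx _ => EReal.coe_le_coe_iff.1 ?_⟩
    calc (x : EReal) ≤ sSup ((fun x : ℝ => (x : EReal)) '' J) := le_sSup ⟨x, hx, rfl⟩
      _ = sSup ((fun x : ℝ => (x : EReal)) '' ks) := hks.sup_eq.symm
      _ ≤ a :=
          sSup_le <| by
            rintro _ ⟨b, hb, rfl⟩
            exact EReal.coe_le_coe_iff.2 (hsucc b hb)

theorem exists_Icc_subset_of_IccPS (hJ : J.OrdConnected) (hks : IsKnotSeq J ks) (ha : a ∈ ks) :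
    ∃ l r, Icc l r ⊆ J ∧ ∀ x ∈ J, x ∈ IccPS ks a → x ∈ Icc l r := by
  obtain ⟨l, hl, hlx⟩ := exists_le_of_predE_le hks ha
  obtain ⟨r, hr, hxr⟩ := exists_le_of_le_succE hks ha
  exact ⟨l, r, hJ.out hl hr, fun x hx hxa => ⟨hlx x hx hxa.1, hxr x hx hxa.2⟩⟩

/-- A function of `S(Φ)` supported in `[a₋, a₊]` is orthogonal to the members of `Φ` vanishing
on a compact interval around `[a₋, a₊]`, so it lies in the span of the finitely many others. -/
theorem finiteDimensional_Vmid_SClos (hJ : J.OrdConnected) (hks : IsKnotSeq J ks)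
    {Φ : Set (L2S J)} (hloc : LocFin J Φ) (hΦ : Φ.Pairwise fun φ ψ => ⟪φ, ψ⟫_ℝ = 0)
    (ha : a ∈ ks) : FiniteDimensional ℝ (Vmid J ks (SClos J Φ) a) := by
  obtain ⟨l, r, hlr, hIcc⟩ := exists_Icc_subset_of_IccPS hJ hks ha
  set F := {φ ∈ Φ | ¬ ∀ᵐ x ∂(volume.restrict J), x ∈ Icc l r → φ x = 0}
  have : FiniteDimensional ℝ (Submodule.span ℝ F) :=
    FiniteDimensional.span_of_finite ℝ (hloc _ isCompact_Icc hlr)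
  have hdisj : ∀ᵐ x ∂(volume.restrict J), x ∉ IccPS ks a ∩ (Icc l r)ᶜ := by
    filter_upwards [ae_restrict_mem hJ.measurableSet] with x hxJ hx
    exact hx.2 (hIcc x hxJ hx.1)
  refine Submodule.finiteDimensional_of_le (S₂ := Submodule.span ℝ F) fun f hf => ?_
  rw [← (Submodule.span ℝ F).closed_of_finiteDimensional.submodule_topologicalClosure_eq]
  refine mem_topologicalClosure_span_of_inner_eq_zero hΦ (fun φ hφ => hφ.1) hf.1
    fun φ hφ => (isOrtho_suppSub hdisj _ ⊤).inner_eq hf (mem_suppSub_top.2 ?_)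
  simpa [SuppIn, F, hφ.1] using hφ.2

end KnotSeq

section Centered

variable {J ks : Set ℝ} {a : ℝ} {V W : Submodule ℝ (L2S J)} {f : L2S J}

theorem VbrevePred_le_suppSub (V : Submodule ℝ (L2S J)) :
    VbrevePred J ks V a ≤ suppSub J V (IccP ks a) := by
  unfold VbrevePred
  split_ifs
  exacts [le_rfl, bot_le]

theorem isOrtho_VbrevePred_Vbreve (V W : Submodule ℝ (L2S J)) :
    VbrevePred J ks V a ⟂ Vbreve J ks W a :=
  (isOrtho_suppSub (ae_notMem_IccP_inter_IccS ks a) V W).mono_left (VbrevePred_le_suppSub V)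

theorem Vmid_mono (h : V ≤ W) : Vmid J ks V a ≤ Vmid J ks W a :=
  suppSub_mono h subset_rfl

theorem Vbar_le_Vmid (hV : IsClosed (V : Set (L2S J))) : Vbar J ks V a ≤ Vmid J ks V a := by
  rintro _ ⟨f, hf, rfl⟩
  have hB : VbrevePred J ks V a ⊔ Vbreve J ks V a ≤ Vmid J ks V a :=
    sup_le ((VbrevePred_le_suppSub V).trans (suppSub_mono le_rfl (IccP_subset_IccPS ks a)))
      (suppSub_mono le_rfl (IccS_subset_IccPS ks a))
  exact sub_mem hf (projL_mem_of_le hB (isClosed_suppSub hV (measurableSet_IccPS ks a)) f)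

theorem projL_VbrevePred_mem_suppSub (V : Submodule ℝ (L2S J)) (f : L2S J) :
    projL (VbrevePred J ks V a) f ∈ suppSub J ⊤ (IccP ks a) :=
  projL_mem_of_le ((VbrevePred_le_suppSub V).trans (suppSub_mono le_top subset_rfl))
    (isClosed_suppSub_top (measurableSet_IccP ks a)) f

theorem projL_Vbreve_mem_suppSub (V : Submodule ℝ (L2S J)) (f : L2S J) :
    projL (Vbreve J ks V a) f ∈ suppSub J ⊤ (IccS ks a) :=
  projL_mem_of_le (suppSub_mono le_top subset_rfl)
    (isClosed_suppSub_top (measurableSet_IccS ks a)) f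

theorem sub_projL_Vbar_eq (hf : f ∈ Vmid J ks V a) :
    f - projL (Vbar J ks V a) f = projL (VbrevePred J ks V a) f + projL (Vbreve J ks V a) f := by
  rw [Vbar, projL_oneSubProjSub_of_mem _ hf, sub_sub_cancel,
    projL_sup_of_isOrtho (isOrtho_VbrevePred_Vbreve V V)]

theorem indLM_sub_indLM_apply_of_suppIn_IccP (hf : SuppIn J f (IccP ks a)) :
    (indLM J (IccS ks a) - indLM J (IccP ks a)) f = -f := by
  change indL2 J (IccS ks a) f - indL2 J (IccP ks a) f = -f
  rw [indL2_eq_zero_of_suppIn (measurableSet_IccS ks a) hf (ae_notMem_IccS_inter_IccP ks a),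
    indL2_of_suppIn (measurableSet_IccP ks a) hf, zero_sub]

theorem indLM_sub_indLM_apply_of_suppIn_IccS (hf : SuppIn J f (IccS ks a)) :
    (indLM J (IccS ks a) - indLM J (IccP ks a)) f = f := by
  change indL2 J (IccS ks a) f - indL2 J (IccP ks a) f = f
  rw [indL2_eq_zero_of_suppIn (measurableSet_IccP ks a) hf (ae_notMem_IccP_inter_IccS ks a),
    indL2_of_suppIn (measurableSet_IccS ks a) hf, sub_zero]

theorem Aminus_le_suppSub (V₀ V₁ : Submodule ℝ (L2S J)) :
    Aminus J ks V₀ V₁ a ≤ suppSub J ⊤ (IccP ks a) :=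
  Submodule.map_le_iff_le_comap.2 fun f _ => projL_VbrevePred_mem_suppSub V₁ f

theorem Aplus_le_suppSub (V₀ V₁ : Submodule ℝ (L2S J)) :
    Aplus J ks V₀ V₁ a ≤ suppSub J ⊤ (IccS ks a) :=
  Submodule.map_le_iff_le_comap.2 fun f _ => projL_Vbreve_mem_suppSub V₁ f

theorem disjoint_Aminus_Aplus (V₀ V₁ : Submodule ℝ (L2S J)) :
    Disjoint (Aminus J ks V₀ V₁ a) (Aplus J ks V₀ V₁ a) :=
  (isOrtho_suppSub (ae_notMem_IccP_inter_IccS ks a) ⊤ ⊤).disjoint.mono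
    (Aminus_le_suppSub V₀ V₁) (Aplus_le_suppSub V₀ V₁)

theorem Tminus_sup_Tplus_le_Tsp (V₀ V₁ : Submodule ℝ (L2S J)) :
    Tminus J ks V₀ V₁ a ⊔ Tplus J ks V₀ V₁ a ≤ Tsp J ks V₀ V₁ a :=
  sup_le (suppSub_le_self _ _) (suppSub_le_self _ _)

theorem finiteDimensional_Tsp (V₀ V₁ : Submodule ℝ (L2S J))
    [FiniteDimensional ℝ (Vmid J ks V₀ a)] : FiniteDimensional ℝ (Tsp J ks V₀ V₁ a) := by
  unfold Tsp Vbar oneSubProjSub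
  infer_instance

theorem Tsp_le_Usp_sup (V₀ V₁ : Submodule ℝ (L2S J)) [FiniteDimensional ℝ (Tsp J ks V₀ V₁ a)] :
    Tsp J ks V₀ V₁ a ≤ Usp J ks V₀ V₁ a ⊔ (Tminus J ks V₀ V₁ a ⊔ Tplus J ks V₀ V₁ a) := by
  have hT := Tminus_sup_Tplus_le_Tsp (ks := ks) (a := a) V₀ V₁
  have : FiniteDimensional ℝ ↥(Tminus J ks V₀ V₁ a ⊔ Tplus J ks V₀ V₁ a) :=
    Submodule.finiteDimensional_of_le hT
  have : CompleteSpace ↥(Tminus J ks V₀ V₁ a ⊔ Tplus J ks V₀ V₁ a) :=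
    FiniteDimensional.complete ℝ _
  rw [Usp, inf_comm, sup_comm]
  exact (Submodule.sup_orthogonal_inf_of_hasOrthogonalProjection hT).ge

end Centered

end KnotWavelet

open KnotWavelet in
theorem Aminus_oplus_Aplus_eq_S_add_T_general
    (J ks : Set ℝ) (hJ : J.OrdConnected) (hks : IsKnotSeq J ks)
    (Φ₀ : Set (L2S J))
    (h₀ : OrthoCenteredBasis J ks Φ₀)
    (V₀ V₁ : Submodule ℝ (L2S J))
    (hV₀ : V₀ = SClos J Φ₀) (hle : V₀ ≤ V₁) :
    ∀ a ∈ ks,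
      Disjoint (Aminus J ks V₀ V₁ a) (Aplus J ks V₀ V₁ a) ∧
      Aminus J ks V₀ V₁ a ⊔ Aplus J ks V₀ V₁ a =
        Ssp J ks V₀ V₁ a ⊔ Tsp J ks V₀ V₁ a := by
  intro a ha
  have hV₀c : IsClosed (V₀ : Set (L2S J)) := hV₀ ▸ Submodule.isClosed_topologicalClosure _
  have : FiniteDimensional ℝ (Vmid J ks V₀ a) :=
    hV₀ ▸ finiteDimensional_Vmid_SClos hJ hks h₀.1.1 h₀.2 ha
  have : FiniteDimensional ℝ (Tsp J ks V₀ V₁ a) := finiteDimensional_Tsp V₀ V₁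
  refine ⟨disjoint_Aminus_Aplus V₀ V₁, map_sup_map_eq_map_sup_map (fun f hf => ?_)
    (fun f _ => indLM_sub_indLM_apply_of_suppIn_IccP (projL_VbrevePred_mem_suppSub V₁ f).2)
    (fun f _ => indLM_sub_indLM_apply_of_suppIn_IccS (projL_Vbreve_mem_suppSub V₁ f).2)
    inf_le_left ?_⟩
  · exact sub_projL_Vbar_eq (Vmid_mono hle (Vbar_le_Vmid hV₀c hf))
  · exact map_le_map_sup_of_le_sup (Tsp_le_Usp_sup V₀ V₁) (Tminus_sup_Tplus_le_Tsp V₀ V₁)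
      (fun f hf => indLM_sub_indLM_apply_of_suppIn_IccP hf.2)
      (fun f hf => indLM_sub_indLM_apply_of_suppIn_IccS hf.2)

open KnotWavelet in
theorem Aminus_oplus_Aplus_eq_S_add_T
    (J ks : Set ℝ) (hJ : J.OrdConnected) (hks : IsKnotSeq J ks)
    (Φ₀ Φ₁ : Set (L2S J))
    (h₀ : OrthoCenteredBasis J ks Φ₀) (h₁ : OrthoCenteredBasis J ks Φ₁)
    (V₀ V₁ : Submodule ℝ (L2S J))
    (hV₀ : V₀ = SClos J Φ₀) (hV₁ : V₁ = SClos J Φ₁) (hle : V₀ ≤ V₁) :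
    ∀ a ∈ ks,
      Disjoint (Aminus J ks V₀ V₁ a) (Aplus J ks V₀ V₁ a) ∧
      Aminus J ks V₀ V₁ a ⊔ Aplus J ks V₀ V₁ a =
        Ssp J ks V₀ V₁ a ⊔ Tsp J ks V₀ V₁ a :=
  Aminus_oplus_Aplus_eq_S_add_T_general J ks hJ hks Φ₀ h₀ V₀ V₁ hV₀ hle
end
end
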